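/- arXiv:2201.05666 — 6 statements merged into one kernel-verified Lean document; each statement's English description precedes it below -/
import Mathlib

section
/- Let d ≥ 1, let B be a d×d real matrix with zero diagonal, let σ : Fin d → ℝ with σ_i ≠ 0 for all i, let Ω = diag(σ_1², …, σ_d²), and let Θ = (I − B) Ω⁻¹ (I − B)ᵀ. If j ≠ k are indices with B_{jk} = 0 and B_{kj} = 0, and there is no index ℓ with B_{jℓ} ≠ 0 and B_{kℓ} ≠ 0, then Θ_{jk} = 0. (In other words, the structure defined by supp(Θ) is a subgraph of the moralized graph of the DAG.) -/
open Matrix Finset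

/-- Lemma 2 (supp(Θ) is a subgraph of the moralized graph): if `j ≠ k` are
non-adjacent in the DAG (`B_{jk} = B_{kj} = 0`) and have no common child
(no `ℓ` with `B_{jℓ} ≠ 0` and `B_{kℓ} ≠ 0`), then `Θ_{jk} = 0`. -/
theorem supp_theta_subgraph_moral_graph
    (d : ℕ) (hd : 1 ≤ d)
    (B : Matrix (Fin d) (Fin d) ℝ) (hBdiag : ∀ i, B i i = 0)
    (σ : Fin d → ℝ) (hσ : ∀ i, σ i ≠ 0)
    (Ω : Matrix (Fin d) (Fin d) ℝ) (hΩ : Ω = Matrix.diagonal fun i => σ i ^ 2)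
    (Θ : Matrix (Fin d) (Fin d) ℝ) (hΘ : Θ = (1 - B) * Ω⁻¹ * (1 - B)ᵀ)
    (j k : Fin d) (hjk : j ≠ k)
    (hjk0 : B j k = 0) (hkj0 : B k j = 0)
    (hNoChild : ¬ ∃ ℓ, B j ℓ ≠ 0 ∧ B k ℓ ≠ 0) :
    Θ j k = 0 := by
  push_neg at hNoChild
  have hΩinv : Ω⁻¹ = Matrix.diagonal fun i => (σ i ^ 2)⁻¹ := by
    rw [hΩ]
    apply Matrix.inv_eq_right_inv
    rw [Matrix.diagonal_mul_diagonal]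
    ext i i'
    by_cases h : i = i' <;>
      simp [Matrix.diagonal_apply, Matrix.one_apply, h, hσ, pow_ne_zero]
  subst hΘ
  rw [hΩinv]
  rw [Matrix.mul_apply]
  apply Finset.sum_eq_zero
  intro ℓ _
  rw [Matrix.mul_diagonal, Matrix.transpose_apply]
  rcases eq_or_ne ℓ j with rfl | hℓj
  · simp [Matrix.one_apply, hjk.symm, hkj0]
  rcases eq_or_ne ℓ k with rfl | hℓk
  · simp [Matrix.one_apply, hjk, hjk0]
  · have := hNoChild ℓ
    simp only [Matrix.sub_apply, Matrix.one_apply_ne' hℓj, Matrix.one_apply_ne' hℓk]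
    by_cases h : B j ℓ = 0
    · simp [h]
    · simp [this h]
end

section
/- Let d ≥ 1, let B be a d×d real matrix with zero diagonal, let σ : Fin d → ℝ with σ_i ≠ 0 for all i, let Ω = diag(σ_1², …, σ_d²), and let Θ = (I − B) Ω⁻¹ (I − B)ᵀ. If j ≠ k are indices with B_{jk} ≠ 0 and B_{kj} = 0 (i.e., j is a parent of k) and Θ_{jk} = 0, then there exists an index ℓ with ℓ ≠ j, ℓ ≠ k, B_{jℓ} ≠ 0 and B_{kℓ} ≠ 0 (i.e., j and k have a common child, so j → ℓ ← k is a shielded collider). -/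
open Matrix Finset

/-- If `j` is a parent of `k` (`B_{jk} ≠ 0`, `B_{kj} = 0`) and `Θ_{jk} = 0`,
then `j` and `k` have a common child `ℓ` (so `j → ℓ ← k` is a shielded
collider). -/
theorem parent_theta_zero_implies_common_child
    (d : ℕ) (hd : 1 ≤ d)
    (B : Matrix (Fin d) (Fin d) ℝ) (hBdiag : ∀ i, B i i = 0)
    (σ : Fin d → ℝ) (hσ : ∀ i, σ i ≠ 0)
    (Ω : Matrix (Fin d) (Fin d) ℝ) (hΩ : Ω = Matrix.diagonal fun i => σ i ^ 2)
    (Θ : Matrix (Fin d) (Fin d) ℝ) (hΘ : Θ = (1 - B) * Ω⁻¹ * (1 - B)ᵀ)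
    (j k : Fin d) (hjk : j ≠ k)
    (hjkne : B j k ≠ 0) (hkj0 : B k j = 0)
    (hTheta0 : Θ j k = 0) :
    ∃ ℓ, ℓ ≠ j ∧ ℓ ≠ k ∧ B j ℓ ≠ 0 ∧ B k ℓ ≠ 0 := by
  by_contra h
  push_neg at h
  set A := (1 : Matrix (Fin d) (Fin d) ℝ) - B with hA
  have hΩinv : Ω⁻¹ = Matrix.diagonal fun i => (σ i ^ 2)⁻¹ := by
    apply Matrix.inv_eq_right_inv
    rw [hΩ, Matrix.diagonal_mul_diagonal]
    rw [show (fun i => σ i ^ 2 * (σ i ^ 2)⁻¹) = fun _ => (1:ℝ) from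
      funext fun i => mul_inv_cancel₀ (pow_ne_zero 2 (hσ i))]
    exact Matrix.diagonal_one
  have hsum : Θ j k = ∑ ℓ, A j ℓ * (σ ℓ ^ 2)⁻¹ * A k ℓ := by
    rw [hΘ, hΩinv, Matrix.mul_apply]
    refine Finset.sum_congr rfl fun ℓ _ => ?_
    rw [Matrix.mul_diagonal, Matrix.transpose_apply]
  have hzero : ∀ ℓ, ℓ ≠ k → A j ℓ * (σ ℓ ^ 2)⁻¹ * A k ℓ = 0 := by
    intro ℓ hℓk
    by_cases hℓj : ℓ = j
    · subst hℓj
      have : A k ℓ = 0 := by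
        simp [hA, Matrix.sub_apply, Matrix.one_apply, hjk.symm, hkj0]
      simp [this]
    · have h1 : A j ℓ = -B j ℓ := by
        simp [hA, Matrix.sub_apply, Matrix.one_apply, Ne.symm hℓj]
      have h2 : A k ℓ = -B k ℓ := by
        simp [hA, Matrix.sub_apply, Matrix.one_apply, Ne.symm hℓk]
      rcases Classical.em (B j ℓ = 0) with hb | hb
      · simp [h1, hb]
      · have := h ℓ hℓj hℓk
        have : B k ℓ = 0 := by tauto
        simp [h2, this]
  have : Θ j k = A j k * (σ k ^ 2)⁻¹ * A k k := by
    rw [hsum]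
    rw [Finset.sum_eq_single k]
    · intro ℓ _ hℓ; exact hzero ℓ hℓ
    · intro hk; exact absurd (Finset.mem_univ k) hk
  rw [this] at hTheta0
  have hAjk : A j k = -B j k := by
    simp [hA, Matrix.sub_apply, Matrix.one_apply, hjk]
  have hAkk : A k k = 1 := by
    simp [hA, Matrix.sub_apply, Matrix.one_apply, hBdiag]
  rw [hAjk, hAkk] at hTheta0
  have hσk : (σ k ^ 2)⁻¹ ≠ 0 := inv_ne_zero (pow_ne_zero _ (hσ k))
  have := mul_ne_zero (mul_ne_zero (neg_ne_zero.mpr hjkne) hσk) (one_ne_zero (α := ℝ))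
  exact this hTheta0
end

section
/- Let d ≥ 1, let B be a d×d real matrix with zero diagonal and no 2-cycles, let σ : Fin d → ℝ with σ_i ≠ 0 for all i, let Ω = diag(σ_1², …, σ_d²), and let Θ = (I − B) Ω⁻¹ (I − B)ᵀ. If j ≠ k are adjacent (B_{jk} ≠ 0 or B_{kj} ≠ 0) and they have no common child (there is no ℓ with B_{jℓ} ≠ 0 and B_{kℓ} ≠ 0), then Θ_{jk} ≠ 0. -/
open Matrix Finset

/-- If `j ≠ k` are adjacent in the DAG (`B_{jk} ≠ 0` or `B_{kj} ≠ 0`), the DAG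
has no 2-cycles, and `j, k` have no common child, then `Θ_{jk} ≠ 0`. -/
theorem adjacent_no_common_child_theta_ne_zero
    (d : ℕ) (hd : 1 ≤ d)
    (B : Matrix (Fin d) (Fin d) ℝ) (hBdiag : ∀ i, B i i = 0)
    (hNoTwoCycle : ∀ j k : Fin d, j ≠ k → ¬ (B j k ≠ 0 ∧ B k j ≠ 0))
    (σ : Fin d → ℝ) (hσ : ∀ i, σ i ≠ 0)
    (Ω : Matrix (Fin d) (Fin d) ℝ) (hΩ : Ω = Matrix.diagonal fun i => σ i ^ 2)
    (Θ : Matrix (Fin d) (Fin d) ℝ) (hΘ : Θ = (1 - B) * Ω⁻¹ * (1 - B)ᵀ)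
    (j k : Fin d) (hjk : j ≠ k)
    (hAdj : B j k ≠ 0 ∨ B k j ≠ 0)
    (hNoChild : ¬ ∃ ℓ, B j ℓ ≠ 0 ∧ B k ℓ ≠ 0) :
    Θ j k ≠ 0 := by
  push_neg at hNoChild
  subst hΩ hΘ
  have hinv : (Matrix.diagonal fun i => σ i ^ 2)⁻¹
      = Matrix.diagonal fun i => (σ i ^ 2)⁻¹ := by
    apply Matrix.inv_eq_right_inv
    rw [Matrix.diagonal_mul_diagonal, ← Matrix.diagonal_one]
    exact congrArg Matrix.diagonal
      (funext fun i => mul_inv_cancel₀ (pow_ne_zero 2 (hσ i)))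
  rw [hinv]
  rw [Matrix.mul_apply]
  simp only [Matrix.mul_diagonal, Matrix.transpose_apply, Matrix.sub_apply]
  set f : Fin d → ℝ :=
    fun l => ((1 : Matrix (Fin d) (Fin d) ℝ) j l - B j l) * (σ l ^ 2)⁻¹ *
      ((1 : Matrix (Fin d) (Fin d) ℝ) k l - B k l) with hf
  show (∑ l, f l) ≠ 0
  have hsum : (∑ l, f l) = ∑ l ∈ ({j, k} : Finset (Fin d)), f l := by
    refine (Finset.sum_subset (Finset.subset_univ _) ?_).symm
    intro l _ hl
    simp only [Finset.mem_insert, Finset.mem_singleton, not_or] at hl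
    have h1 : (1 : Matrix (Fin d) (Fin d) ℝ) j l = 0 :=
      Matrix.one_apply_ne (Ne.symm hl.1)
    have h2 : (1 : Matrix (Fin d) (Fin d) ℝ) k l = 0 :=
      Matrix.one_apply_ne (Ne.symm hl.2)
    rcases em (B j l = 0) with h | h
    · simp [hf, h1, h]
    · simp [hf, h2, hNoChild l h]
  rw [hsum, Finset.sum_pair hjk]
  have hjj : (1 : Matrix (Fin d) (Fin d) ℝ) j j = 1 := Matrix.one_apply_eq j
  have hkk : (1 : Matrix (Fin d) (Fin d) ℝ) k k = 1 := Matrix.one_apply_eq k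
  have hjk1 : (1 : Matrix (Fin d) (Fin d) ℝ) j k = 0 := Matrix.one_apply_ne hjk
  have hkj1 : (1 : Matrix (Fin d) (Fin d) ℝ) k j = 0 := Matrix.one_apply_ne hjk.symm
  have hσj : (σ j ^ 2)⁻¹ ≠ 0 := inv_ne_zero (pow_ne_zero _ (hσ j))
  have hσk : (σ k ^ 2)⁻¹ ≠ 0 := inv_ne_zero (pow_ne_zero _ (hσ k))
  rcases hAdj with h | h
  · have hz : B k j = 0 := by
      by_contra hz
      exact hNoTwoCycle j k hjk ⟨h, hz⟩
    simp only [hf, hjj, hkk, hjk1, hkj1, hBdiag, hz, sub_zero, zero_sub, sub_self,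
      mul_zero, zero_mul, zero_add, add_zero, mul_one, one_mul, neg_mul, mul_neg,
      ne_eq, neg_eq_zero]
    exact mul_ne_zero h hσk
  · have hz : B j k = 0 := by
      by_contra hz
      exact hNoTwoCycle j k hjk ⟨hz, h⟩
    simp only [hf, hjj, hkk, hjk1, hkj1, hBdiag, hz, sub_zero, zero_sub, sub_self,
      mul_zero, zero_mul, zero_add, add_zero, mul_one, one_mul, neg_mul, mul_neg,
      ne_eq, neg_eq_zero]
    exact mul_ne_zero hσj h
end

section
/- Let d ≥ 1, let B be a d×d real matrix with zero diagonal, let σ : Fin d → ℝ with σ_i ≠ 0 for all i, let Ω = diag(σ_1², …, σ_d²), and let Θ = (I − B) Ω⁻¹ (I − B)ᵀ. Suppose j ≠ k are non-adjacent (B_{jk} = 0 and B_{kj} = 0) and there is exactly one index i with B_{ji} ≠ 0 and B_{ki} ≠ 0 (a unique common child, forming an unshielded collider j → i ← k). Then Θ_{jk} = σ_i⁻² B_{ji} B_{ki}, and in particular Θ_{jk} ≠ 0. -/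
open Matrix Finset

/-- If `j ≠ k` are non-adjacent and have exactly one common child `i`
(an unshielded collider `j → i ← k`), then `Θ_{jk} = σ_i⁻² B_{ji} B_{ki} ≠ 0`. -/
theorem unique_unshielded_collider_theta
    (d : ℕ) (hd : 1 ≤ d)
    (B : Matrix (Fin d) (Fin d) ℝ) (hBdiag : ∀ i, B i i = 0)
    (σ : Fin d → ℝ) (hσ : ∀ i, σ i ≠ 0)
    (Ω : Matrix (Fin d) (Fin d) ℝ) (hΩ : Ω = Matrix.diagonal fun i => σ i ^ 2)
    (Θ : Matrix (Fin d) (Fin d) ℝ) (hΘ : Θ = (1 - B) * Ω⁻¹ * (1 - B)ᵀ)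
    (j k : Fin d) (hjk : j ≠ k)
    (hjk0 : B j k = 0) (hkj0 : B k j = 0)
    (i : Fin d) (hChild : B j i ≠ 0 ∧ B k i ≠ 0)
    (hUnique : ∀ ℓ, B j ℓ ≠ 0 ∧ B k ℓ ≠ 0 → ℓ = i) :
    Θ j k = (σ i ^ 2)⁻¹ * B j i * B k i ∧ Θ j k ≠ 0 := by
  have hinv : Ω⁻¹ = Matrix.diagonal fun i => (σ i ^ 2)⁻¹ := by
    apply Matrix.inv_eq_right_inv
    rw [hΩ, Matrix.diagonal_mul_diagonal]
    have h1 : ∀ x : Fin d, σ x ^ 2 * (σ x ^ 2)⁻¹ = 1 :=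
      fun x => mul_inv_cancel₀ (pow_ne_zero 2 (hσ x))
    simp [h1]
  have hij : i ≠ j := fun h => hChild.2 (h ▸ hkj0)
  have hik : i ≠ k := fun h => hChild.1 (h ▸ hjk0)
  have key : Θ j k = (σ i ^ 2)⁻¹ * B j i * B k i := by
    rw [hΘ, hinv]
    rw [Matrix.mul_assoc, Matrix.mul_apply]
    rw [Finset.sum_eq_single i]
    · simp [Matrix.mul_apply, Matrix.diagonal, Matrix.one_apply, hij.symm, hik.symm, hij, hik,
        Matrix.sub_apply, Matrix.transpose_apply, Finset.mul_sum]
      ring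
    · intro l _ hl
      by_cases hlj : l = j
      · subst hlj
        simp [Matrix.mul_apply, Matrix.diagonal, Matrix.one_apply, hjk.symm, hjk,
          Matrix.sub_apply, Matrix.transpose_apply, hkj0, hBdiag]
      · by_cases hlk : l = k
        · subst hlk
          simp [Matrix.mul_apply, Matrix.diagonal, Matrix.one_apply, hjk, hjk.symm,
            Matrix.sub_apply, Matrix.transpose_apply, hjk0, hBdiag]
        · have : B j l = 0 ∨ B k l = 0 := by
            by_contra h
            push_neg at h
            exact hl (hUnique l h)
          rcases this with h0 | h0 <;>
            simp [Matrix.mul_apply, Matrix.diagonal, Matrix.one_apply,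
              Ne.symm hlj, Ne.symm hlk, hlj, hlk, Matrix.sub_apply, Matrix.transpose_apply, h0]
    · intro h
      exact absurd (Finset.mem_univ i) h
  refine ⟨key, ?_⟩
  rw [key]
  exact mul_ne_zero (mul_ne_zero (inv_ne_zero (pow_ne_zero 2 (hσ i))) hChild.1) hChild.2
end

section
/- (Theorem 2, algebraic form.) Let d ≥ 1, let B be a d×d real matrix with zero diagonal and no 2-cycles, let σ : Fin d → ℝ with σ_i ≠ 0 for all i, let Ω = diag(σ_1², …, σ_d²), and let Θ = (I − B) Ω⁻¹ (I − B)ᵀ. Then the following are equivalent: (i) for every shielded collider, i.e., every pair j ≠ k that is adjacent and has a common child ℓ, one has Θ_{jk} ≠ 0 (the single shielded-collider-faithfulness condition); (ii) for every adjacent pair j ≠ k (B_{jk} ≠ 0 or B_{kj} ≠ 0), one has Θ_{jk} ≠ 0, i.e., the structure defined by supp(Θ) is a super-structure of the DAG. -/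
open Matrix Finset

/-- Theorem 2 (algebraic form): the single shielded-collider-faithfulness
condition (every adjacent pair with a common child has `Θ_{jk} ≠ 0`) holds
if and only if the structure defined by `supp(Θ)` is a super-structure of the
DAG (every adjacent pair has `Θ_{jk} ≠ 0`). -/
theorem sscf_iff_super_structure
    (d : ℕ) (hd : 1 ≤ d)
    (B : Matrix (Fin d) (Fin d) ℝ) (hBdiag : ∀ i, B i i = 0)
    (hNoTwoCycle : ∀ j k : Fin d, j ≠ k → ¬ (B j k ≠ 0 ∧ B k j ≠ 0))
    (σ : Fin d → ℝ) (hσ : ∀ i, σ i ≠ 0)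
    (Ω : Matrix (Fin d) (Fin d) ℝ) (hΩ : Ω = Matrix.diagonal fun i => σ i ^ 2)
    (Θ : Matrix (Fin d) (Fin d) ℝ) (hΘ : Θ = (1 - B) * Ω⁻¹ * (1 - B)ᵀ) :
    (∀ j k : Fin d, j ≠ k → (B j k ≠ 0 ∨ B k j ≠ 0) →
        (∃ ℓ, B j ℓ ≠ 0 ∧ B k ℓ ≠ 0) → Θ j k ≠ 0)
      ↔ (∀ j k : Fin d, j ≠ k → (B j k ≠ 0 ∨ B k j ≠ 0) → Θ j k ≠ 0) := by
  constructor
  · intro h j k hjk hadj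
    by_cases hcc : ∃ ℓ, B j ℓ ≠ 0 ∧ B k ℓ ≠ 0
    · exact h j k hjk hadj hcc
    · -- no common child: compute Θ j k explicitly
      push_neg at hcc
      have hΩinv : Ω⁻¹ = Matrix.diagonal fun i => (σ i ^ 2)⁻¹ := by
        refine Matrix.inv_eq_right_inv ?_
        rw [hΩ, Matrix.diagonal_mul_diagonal]
        ext a b
        by_cases hab : a = b
        · subst hab
          simp [mul_inv_cancel₀ (pow_ne_zero 2 (hσ a))]
        · simp [Matrix.diagonal_apply_ne _ hab, Matrix.one_apply_ne hab]
      have hentry : Θ j k = ∑ ℓ, ((1 : Matrix (Fin d) (Fin d) ℝ) j ℓ - B j ℓ) *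
          (σ ℓ ^ 2)⁻¹ * ((1 : Matrix (Fin d) (Fin d) ℝ) k ℓ - B k ℓ) := by
        rw [hΘ, hΩinv, Matrix.mul_apply]
        refine Finset.sum_congr rfl fun ℓ _ => ?_
        rw [Matrix.mul_diagonal, Matrix.transpose_apply, Matrix.sub_apply,
          Matrix.sub_apply]
      have hval : Θ j k = -B k j * (σ j ^ 2)⁻¹ + -B j k * (σ k ^ 2)⁻¹ := by
        rw [hentry]
        rw [show (Finset.univ : Finset (Fin d)) = ({j, k} : Finset (Fin d)) ∪
            (Finset.univ \ {j, k}) by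
          rw [Finset.union_sdiff_of_subset (Finset.subset_univ _)]]
        rw [Finset.sum_union (Finset.disjoint_sdiff)]
        have h2 : ∑ ℓ ∈ Finset.univ \ {j, k},
            ((1 : Matrix (Fin d) (Fin d) ℝ) j ℓ - B j ℓ) * (σ ℓ ^ 2)⁻¹ *
            ((1 : Matrix (Fin d) (Fin d) ℝ) k ℓ - B k ℓ) = 0 := by
          refine Finset.sum_eq_zero fun ℓ hℓ => ?_
          simp only [Finset.mem_sdiff, Finset.mem_insert, Finset.mem_singleton] at hℓ
          push_neg at hℓ
          obtain ⟨-, hℓj, hℓk⟩ := hℓ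
          have h1j : (1 : Matrix (Fin d) (Fin d) ℝ) j ℓ = 0 :=
            Matrix.one_apply_ne (fun h => hℓj h.symm)
          have h1k : (1 : Matrix (Fin d) (Fin d) ℝ) k ℓ = 0 :=
            Matrix.one_apply_ne (fun h => hℓk h.symm)
          rw [h1j, h1k]
          by_cases hB : B j ℓ = 0
          · simp [hB]
          · simp [hcc ℓ hB]
        rw [h2, add_zero, Finset.sum_pair hjk]
        have h1jj : (1 : Matrix (Fin d) (Fin d) ℝ) j j = 1 := Matrix.one_apply_eq j
        have h1kk : (1 : Matrix (Fin d) (Fin d) ℝ) k k = 1 := Matrix.one_apply_eq k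
        have h1jk : (1 : Matrix (Fin d) (Fin d) ℝ) j k = 0 := Matrix.one_apply_ne hjk
        have h1kj : (1 : Matrix (Fin d) (Fin d) ℝ) k j = 0 :=
          Matrix.one_apply_ne hjk.symm
        rw [h1jj, h1kk, h1jk, h1kj, hBdiag j, hBdiag k]
        ring
      have hσj : (σ j ^ 2)⁻¹ ≠ 0 := inv_ne_zero (pow_ne_zero 2 (hσ j))
      have hσk : (σ k ^ 2)⁻¹ ≠ 0 := inv_ne_zero (pow_ne_zero 2 (hσ k))
      have hno := hNoTwoCycle j k hjk
      rcases hadj with hBjk | hBkj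
      · have hBkj : B k j = 0 := by
          by_contra h'
          exact hno ⟨hBjk, h'⟩
        rw [hval, hBkj]
        simpa using mul_ne_zero (neg_ne_zero.mpr hBjk) hσk
      · have hBjk : B j k = 0 := by
          by_contra h'
          exact hno ⟨h', hBkj⟩
        rw [hval, hBjk]
        simpa using mul_ne_zero (neg_ne_zero.mpr hBkj) hσj
  · intro h j k hjk hadj _
    exact h j k hjk hadj
end

section
/- (Theorem 1, algebraic form.) Let d ≥ 1, let B be a d×d real matrix with zero diagonal and no 2-cycles, let σ : Fin d → ℝ with σ_i ≠ 0 for all i, let Ω = diag(σ_1², …, σ_d²), and let Θ = (I − B) Ω⁻¹ (I − B)ᵀ. Then the following are equivalent: (i) for every pair j ≠ k that has a common child ℓ (i.e., every collider j → ℓ ← k, shielded or unshielded), one has Θ_{jk} ≠ 0 (the single shielded- and unshielded-collider-faithfulness conditions); (ii) for all j ≠ k, Θ_{jk} ≠ 0 if and only if j and k are adjacent or have a common child, i.e., the structure defined by supp(Θ) equals the moralized graph of the DAG. -/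
open Matrix Finset

lemma theta_entry_aux
    (d : ℕ)
    (B : Matrix (Fin d) (Fin d) ℝ) (hBdiag : ∀ i, B i i = 0)
    (σ : Fin d → ℝ) (hσ : ∀ i, σ i ≠ 0)
    (Ω : Matrix (Fin d) (Fin d) ℝ) (hΩ : Ω = Matrix.diagonal fun i => σ i ^ 2)
    (Θ : Matrix (Fin d) (Fin d) ℝ) (hΘ : Θ = (1 - B) * Ω⁻¹ * (1 - B)ᵀ)
    (j k : Fin d) (hjk : j ≠ k) :
    Θ j k = (∑ ℓ, B j ℓ * B k ℓ * (σ ℓ ^ 2)⁻¹)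
      - B k j * (σ j ^ 2)⁻¹ - B j k * (σ k ^ 2)⁻¹ := by
  have hinv : Ω⁻¹ = Matrix.diagonal fun i => (σ i ^ 2)⁻¹ := by
    apply Matrix.inv_eq_right_inv
    rw [hΩ, Matrix.diagonal_mul_diagonal]
    have : (fun i => σ i ^ 2 * (σ i ^ 2)⁻¹) = fun _ : Fin d => (1 : ℝ) := by
      funext i
      exact mul_inv_cancel₀ (pow_ne_zero 2 (hσ i))
    rw [this, Matrix.diagonal_one]
  have hentry : Θ j k = ∑ ℓ, ((if j = ℓ then (1:ℝ) else 0) - B j ℓ) * (σ ℓ ^ 2)⁻¹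
      * ((if k = ℓ then (1:ℝ) else 0) - B k ℓ) := by
    rw [hΘ, hinv, Matrix.mul_apply]
    apply Finset.sum_congr rfl
    intro ℓ _
    rw [Matrix.mul_diagonal, Matrix.transpose_apply, Matrix.sub_apply, Matrix.sub_apply,
      Matrix.one_apply, Matrix.one_apply]
  rw [hentry]
  have hptw : ∀ ℓ : Fin d, ((if j = ℓ then (1:ℝ) else 0) - B j ℓ) * (σ ℓ ^ 2)⁻¹
      * ((if k = ℓ then (1:ℝ) else 0) - B k ℓ)
      = B j ℓ * B k ℓ * (σ ℓ ^ 2)⁻¹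
        + (if ℓ = j then -(B k j * (σ j ^ 2)⁻¹) else 0)
        + (if ℓ = k then -(B j k * (σ k ^ 2)⁻¹) else 0) := by
    intro ℓ
    by_cases hℓj : ℓ = j
    · subst hℓj
      have hne : ¬ (k = ℓ) := fun h => hjk h.symm
      simp [hBdiag, hne, hjk, hjk.symm]
      ring_nf
    · by_cases hℓk : ℓ = k
      · subst hℓk
        have hne : ¬ (j = ℓ) := hjk
        simp [hBdiag, hne, hℓj, hjk]
      · have h1 : ¬ (j = ℓ) := fun h => hℓj h.symm
        have h2 : ¬ (k = ℓ) := fun h => hℓk h.symm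
        simp [h1, h2, hℓj, hℓk]
        ring
  rw [Finset.sum_congr rfl (fun ℓ _ => hptw ℓ)]
  rw [Finset.sum_add_distrib, Finset.sum_add_distrib, Finset.sum_ite_eq',
    Finset.sum_ite_eq']
  simp
  ring

/-- Theorem 1 (algebraic form): the single shielded- and unshielded-collider-
faithfulness conditions (every pair `j ≠ k` with a common child has
`Θ_{jk} ≠ 0`) hold if and only if the structure defined by `supp(Θ)` equals
the moralized graph of the DAG (for all `j ≠ k`, `Θ_{jk} ≠ 0` iff `j, k` are
adjacent or have a common child). -/
theorem sscf_sucf_iff_moral_graph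
    (d : ℕ) (hd : 1 ≤ d)
    (B : Matrix (Fin d) (Fin d) ℝ) (hBdiag : ∀ i, B i i = 0)
    (hNoTwoCycle : ∀ j k : Fin d, j ≠ k → ¬ (B j k ≠ 0 ∧ B k j ≠ 0))
    (σ : Fin d → ℝ) (hσ : ∀ i, σ i ≠ 0)
    (Ω : Matrix (Fin d) (Fin d) ℝ) (hΩ : Ω = Matrix.diagonal fun i => σ i ^ 2)
    (Θ : Matrix (Fin d) (Fin d) ℝ) (hΘ : Θ = (1 - B) * Ω⁻¹ * (1 - B)ᵀ) :
    (∀ j k : Fin d, j ≠ k → (∃ ℓ, B j ℓ ≠ 0 ∧ B k ℓ ≠ 0) → Θ j k ≠ 0)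
      ↔ (∀ j k : Fin d, j ≠ k →
          (Θ j k ≠ 0 ↔ (B j k ≠ 0 ∨ B k j ≠ 0 ∨ ∃ ℓ, B j ℓ ≠ 0 ∧ B k ℓ ≠ 0))) := by
  have key := theta_entry_aux d B hBdiag σ hσ Ω hΩ Θ hΘ
  constructor
  · intro h j k hjk
    constructor
    · intro hΘne
      by_contra hc
      push_neg at hc
      obtain ⟨h1, h2, h3⟩ := hc
      apply hΘne
      rw [key j k hjk]
      have hz : ∀ ℓ : Fin d, B j ℓ * B k ℓ = 0 := by
        intro ℓ
        by_contra h'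
        rcases mul_ne_zero_iff.mp h' with ⟨ha, hb⟩
        exact hb (h3 ℓ ha)
      simp [hz, h1, h2]
    · intro hadj
      rcases hadj with hjk' | hkj | hchild
      · by_cases hch : ∃ ℓ, B j ℓ ≠ 0 ∧ B k ℓ ≠ 0
        · exact h j k hjk hch
        · rw [key j k hjk]
          push_neg at hch
          have hkj0 : B k j = 0 := by
            by_contra h'
            exact hNoTwoCycle j k hjk ⟨hjk', h'⟩
          have hz : ∀ ℓ : Fin d, B j ℓ * B k ℓ = 0 := by
            intro ℓ
            by_contra h'
            rcases mul_ne_zero_iff.mp h' with ⟨ha, hb⟩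
            exact hb (hch ℓ ha)
          simp [hz, hkj0]
          exact ⟨hjk', hσ k⟩
      · by_cases hch : ∃ ℓ, B j ℓ ≠ 0 ∧ B k ℓ ≠ 0
        · exact h j k hjk hch
        · rw [key j k hjk]
          push_neg at hch
          have hjk0 : B j k = 0 := by
            by_contra h'
            exact hNoTwoCycle j k hjk ⟨h', hkj⟩
          have hz : ∀ ℓ : Fin d, B j ℓ * B k ℓ = 0 := by
            intro ℓ
            by_contra h'
            rcases mul_ne_zero_iff.mp h' with ⟨ha, hb⟩
            exact hb (hch ℓ ha)
          simp [hz, hjk0]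
          exact ⟨hkj, hσ j⟩
      · exact h j k hjk hchild
  · intro h j k hjk hch
    exact (h j k hjk).mpr (Or.inr (Or.inr hch))
end
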